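/- Suppose there is no feasible s-t-path of length at most ℓ. Then every feasible s-t-walk W = (v_0, …, v_ℓ) of length ℓ contains indices 0 ≤ i < j ≤ ℓ with v_i = v_j such that the subsequence (v_i, v_{i+1}, …, v_j) is not a palindrome (i.e. there exists 0 ≤ k ≤ j−i with v_{i+k} ≠ v_{j−k}). -/
import Mathlib


/-- `w` is an `s`-`t`-walk of length `ℓ` in `G` (indexed by `Fin (ℓ+1)`). -/
def IsWalk {V : Type*} (G : SimpleGraph V) (s t : V) {ℓ : ℕ} (w : Fin (ℓ + 1) → V) : Prop :=
  w 0 = s ∧ w (Fin.last ℓ) = t ∧ ∀ i : Fin ℓ, G.Adj (w i.castSucc) (w i.succ)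

/-- `w` is a feasible `s`-`t`-walk: its labels sum to `c`, and it meets each `X i`
in at most one index. -/
def Feasible {V : Type*} (G : SimpleGraph V) (s t : V) {d p : ℕ}
    (g : Sym2 V → (Fin d → ZMod 2)) (c : Fin d → ZMod 2)
    (X : Fin p → Set V) {ℓ : ℕ} (w : Fin (ℓ + 1) → V) : Prop :=
  IsWalk G s t w ∧
  (∑ i : Fin ℓ, g s(w i.castSucc, w i.succ)) = c ∧
  ∀ i : Fin p, ∀ j j' : Fin (ℓ + 1), w j ∈ X i → w j' ∈ X i → j = j'

/-- All repetitions of `w` (on indices `≤ n`) are palindromic. -/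
def Pal {V : Type*} (n : ℕ) (w : ℕ → V) : Prop :=
  ∀ a b k : ℕ, a < b → b ≤ n → a + k ≤ b → w a = w b → w (a + k) = w (b - k)

/-- Local 2-periodicity: a repetition `w a = w b` together with a backtrack
`w i = w (i+2)` inside `[a,b]` forces `w` to be 2-periodic between `i` and
`a+b-2-i`. -/
lemma periodicity {V : Type*} {n : ℕ} {w : ℕ → V} (hP : Pal n w)
    {a b i : ℕ} (hai : a ≤ i) (hib : i + 2 ≤ b) (hbn : b ≤ n)
    (hab : w a = w b) (hbt : w i = w (i + 2)) :
    ∀ m : ℕ, ((i ≤ m ∧ m + i + 2 ≤ a + b) ∨ (m ≤ i ∧ a + b ≤ m + i + 2)) →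
      w m = w (m + 2) := by
  intro m hm
  obtain ⟨i₂, hi₂⟩ : ∃ i₂, i₂ + i + 2 = a + b := ⟨a + b - 2 - i, by omega⟩
  obtain ⟨q, hq⟩ : ∃ q, q + m + 2 = a + b := ⟨a + b - 2 - m, by omega⟩
  have haltb : a < b := by omega
  -- step 1 : w i₂ = w i
  have h1 : w i₂ = w i := by
    have := hP a b (b - i - 2) haltb hbn (by omega) hab
    have e1 : a + (b - i - 2) = i₂ := by omega
    have e2 : b - (b - i - 2) = i + 2 := by omega
    rw [e1, e2] at this
    rw [this, hbt]
  -- step 2 : w m = w q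
  have h2 : w m = w q := by
    rcases hm with ⟨him, hm2⟩ | ⟨hmi, hm2⟩
    · -- i ≤ m ≤ i₂
      rcases eq_or_lt_of_le (show i ≤ i₂ by omega) with he | hlt
      · have e : q = m := by omega
        rw [e]
      · have := hP i i₂ (m - i) hlt (by omega) (by omega) h1.symm
        have e1 : i + (m - i) = m := by omega
        have e2 : i₂ - (m - i) = q := by omega
        rwa [e1, e2] at this
    · -- i₂ ≤ m ≤ i
      rcases eq_or_lt_of_le (show i₂ ≤ i by omega) with he | hlt
      · have e : q = m := by omega
        rw [e]
      · have := hP i₂ i (m - i₂) hlt (by omega) (by omega) h1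
        have e1 : i₂ + (m - i₂) = m := by omega
        have e2 : i - (m - i₂) = q := by omega
        rwa [e1, e2] at this
  -- step 3 : w (m+2) = w q
  have h3 : w (m + 2) = w q := by
    have hma : a ≤ m := by omega
    have := hP a b (m + 2 - a) haltb hbn (by omega) hab
    have e1 : a + (m + 2 - a) = m + 2 := by omega
    have e2 : b - (m + 2 - a) = q := by omega
    rwa [e1, e2] at this
  rw [h2, h3]

/-- The main inductive argument, phrased for `ℕ`-indexed walks. -/
lemma main_lemma {V : Type*} [Fintype V] (G : SimpleGraph V) (s t : V)
    (d p : ℕ) (g : Sym2 V → (Fin d → ZMod 2)) (c : Fin d → ZMod 2)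
    (X : Fin p → Set V) (ℓ : ℕ)
    (hno : ∀ ℓ' ≤ ℓ, ∀ w : Fin (ℓ' + 1) → V,
      Feasible G s t g c X w → ¬ Function.Injective w) :
    ∀ n, n ≤ ℓ → ∀ w : ℕ → V, w 0 = s → w n = t →
      (∀ k < n, G.Adj (w k) (w (k + 1))) →
      (∑ k ∈ Finset.range n, g s(w k, w (k + 1))) = c →
      (∀ ix : Fin p, ∀ j j' : ℕ, j ≤ n → j' ≤ n → w j ∈ X ix → w j' ∈ X ix → j = j') →
      Pal n w → False := by
  intro n
  induction n using Nat.strong_induction_on with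
  | _ n IH =>
    intro hn w hs ht hadj hsum hX hP
    -- package as a `Fin`-walk and apply `hno`
    set wF : Fin (n + 1) → V := fun x => w x.val with hwF
    have hFeas : Feasible G s t g c X wF := by
      refine ⟨⟨hs, ht, ?_⟩, ?_, ?_⟩
      · intro i
        have : G.Adj (w i.val) (w (i.val + 1)) := hadj i.val i.isLt
        simpa [wF] using this
      · rw [show (∑ i : Fin n, g s(wF i.castSucc, wF i.succ))
              = ∑ i : Fin n, g s(w i.val, w (i.val + 1)) by
            apply Finset.sum_congr rfl; intro i _; simp [wF]]
        rw [Fin.sum_univ_eq_sum_range (fun k => g s(w k, w (k + 1))) n]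
        exact hsum
      · intro ix j j' hj hj'
        have := hX ix j.val j'.val (by omega) (by omega) hj hj'
        exact Fin.ext this
    have hninj := hno n hn wF hFeas
    rw [Function.not_injective_iff] at hninj
    obtain ⟨a0, b0, hab0, hne0⟩ := hninj
    -- a repetition in ℕ-form
    have hrep : ∃ a b : ℕ, a < b ∧ b ≤ n ∧ w a = w b := by
      rcases lt_trichotomy a0 b0 with h | h | h
      · exact ⟨a0.val, b0.val, h, by omega, hab0⟩
      · exact absurd h hne0
      · exact ⟨b0.val, a0.val, h, by omega, hab0.symm⟩
    obtain ⟨a1, b1, hab1, hb1n, heq1⟩ := hrep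
    -- find a backtrack
    have hbt : ∃ i, i + 2 ≤ n ∧ w i = w (i + 2) := by
      by_contra hno2
      push_neg at hno2
      have key : ∀ m, ∀ ii, 0 < m → ii + m ≤ n → w ii ≠ w (ii + m) := by
        intro m
        induction m using Nat.strong_induction_on with
        | _ m IHm =>
          intro ii hm hmn heq
          match m, hm with
          | 1, _ => exact (hadj ii (by omega)).ne heq
          | 2, _ => exact hno2 ii hmn heq
          | (m' + 3), _ =>
            have := hP ii (ii + (m' + 3)) 1 (by omega) hmn (by omega) heq
            have e : ii + (m' + 3) - 1 = (ii + 1) + (m' + 1) := by omega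
            rw [e] at this
            exact IHm (m' + 1) (by omega) (ii + 1) (by omega) (by omega) this
      exact key (b1 - a1) a1 (by omega) (by omega)
        (by rw [show a1 + (b1 - a1) = b1 by omega]; exact heq1)
    obtain ⟨i, hi2, hib⟩ := hbt
    obtain ⟨m, rfl⟩ : ∃ m, n = m + 2 := ⟨n - 2, by omega⟩
    have him : i ≤ m := by omega
    -- the shortened walk
    set w2 : ℕ → V := fun x => if x ≤ i then w x else w (x + 2) with hw2def
    have hw2a : ∀ x, x ≤ i → w2 x = w x := by intro x hx; simp [w2, hx]
    have hw2b : ∀ x, i ≤ x → w2 x = w (x + 2) := by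
      intro x hx
      rcases eq_or_lt_of_le hx with h | h
      · subst h; simp [w2, hib]
      · simp [w2, show ¬ x ≤ i by omega]
    apply IH m (by omega) (by omega) w2
    · rw [hw2a 0 (by omega)]; exact hs
    · rcases le_or_gt m i with h | h
      · have : i = m := by omega
        rw [hw2a m (by omega), ← this, hib, this]; exact ht
      · rw [hw2b m (by omega)]; exact ht
    · intro k hk
      rcases lt_or_ge k i with h | h
      · rw [hw2a k (by omega), hw2a (k + 1) (by omega)]
        exact hadj k (by omega)
      · rw [hw2b k h, hw2b (k + 1) (by omega)]
        exact hadj (k + 2) (by omega)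
    · -- the sum condition
      have hterm : ∀ k, k ∈ Finset.Ico 0 i →
          g s(w2 k, w2 (k + 1)) = g s(w k, w (k + 1)) := by
        intro k hk
        rw [Finset.mem_Ico] at hk
        rw [hw2a k (by omega), hw2a (k + 1) (by omega)]
      have hterm2 : ∀ k, k ∈ Finset.Ico i m →
          g s(w2 k, w2 (k + 1)) = g s(w (k + 2), w (k + 2 + 1)) := by
        intro k hk
        rw [Finset.mem_Ico] at hk
        rw [hw2b k (by omega), hw2b (k + 1) (by omega)]
      have hsplit : (∑ k ∈ Finset.range m, g s(w2 k, w2 (k + 1)))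
          = (∑ k ∈ Finset.Ico 0 i, g s(w k, w (k + 1)))
            + ∑ k ∈ Finset.Ico (i + 2) (m + 2), g s(w k, w (k + 1)) := by
        rw [Finset.range_eq_Ico,
          ← Finset.sum_Ico_consecutive (fun k => g s(w2 k, w2 (k + 1)))
            (Nat.zero_le i) him,
          Finset.sum_congr rfl hterm, Finset.sum_congr rfl hterm2,
          Finset.sum_Ico_add' (fun k => g s(w k, w (k + 1))) i m 2]
      have hsplit2 : (∑ k ∈ Finset.range (m + 2), g s(w k, w (k + 1)))
          = (∑ k ∈ Finset.Ico 0 i, g s(w k, w (k + 1)))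
            + (g s(w i, w (i + 1)) + (g s(w (i + 1), w (i + 1 + 1))
              + ∑ k ∈ Finset.Ico (i + 2) (m + 2), g s(w k, w (k + 1)))) := by
        rw [Finset.range_eq_Ico,
          ← Finset.sum_Ico_consecutive (fun k => g s(w k, w (k + 1)))
            (Nat.zero_le i) (by omega : i ≤ m + 2),
          Finset.sum_eq_sum_Ico_succ_bot (by omega : i < m + 2),
          Finset.sum_eq_sum_Ico_succ_bot (by omega : i + 1 < m + 2)]
      have hcancel : g s(w i, w (i + 1)) + g s(w (i + 1), w (i + 1 + 1)) = 0 := by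
        have : s(w (i + 1), w (i + 1 + 1)) = s(w i, w (i + 1)) := by
          rw [show i + 1 + 1 = i + 2 by omega, ← hib]
          exact Sym2.eq_swap
        rw [this]
        funext j
        exact CharTwo.add_self_eq_zero _
      rw [hsplit2] at hsum
      rw [hsplit]
      linear_combination hsum - hcancel
    · -- the X condition
      intro ix j j' hj hj' hmem hmem'
      have hψ : ∀ x, w2 x = w (if x ≤ i then x else x + 2) := by
        intro x; by_cases h : x ≤ i <;> simp [w2, h]
      rw [hψ] at hmem hmem'
      have := hX ix _ _
        (by split <;> omega) (by split <;> omega) hmem hmem'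
      split at this <;> split at this <;> omega
    · -- Pal for the shortened walk
      intro a' b' k hab' hb'm hk heqw2
      set x := a' + k with hxdef
      have hy : ∃ y, b' - k = y ∧ x + y = a' + b' := ⟨b' - k, rfl, by omega⟩
      obtain ⟨y, hyeq, hxy⟩ := hy
      rw [hyeq]
      have hya : a' ≤ y := by omega
      have hyb : y ≤ b' := by omega
      have hxb : x ≤ b' := hk
      rcases le_or_gt b' i with hbi | hbi
      · -- all indices ≤ i
        rw [hw2a a' (by omega), hw2a b' (by omega)] at heqw2
        rw [hw2a x (by omega), hw2a y (by omega)]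
        have := hP a' b' k hab' (by omega) hk heqw2
        rwa [hyeq] at this
      rcases le_or_gt i a' with hia | hia
      · -- all indices ≥ i
        rw [hw2b a' hia, hw2b b' (by omega)] at heqw2
        rw [hw2b x (by omega), hw2b y (by omega)]
        have := hP (a' + 2) (b' + 2) k (by omega) (by omega) (by omega) heqw2
        have e : b' + 2 - k = y + 2 := by omega
        rwa [e, show a' + 2 + k = x + 2 by omega] at this
      -- straddling case : a' < i < ... with a' ≤ i < b'
      have hab : w a' = w (b' + 2) := by
        rw [hw2a a' (by omega), hw2b b' (by omega)] at heqw2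
        exact heqw2
      have haltb : a' < b' + 2 := by omega
      have hbn : b' + 2 ≤ m + 2 := by omega
      -- the basic reflection : w x = w (y + 2)
      have hrefl : w x = w (y + 2) := by
        have := hP a' (b' + 2) k haltb hbn (by omega) hab
        have e : b' + 2 - k = y + 2 := by omega
        rwa [e] at this
      rcases le_or_gt x i with hxi | hxi <;> rcases le_or_gt y i with hyi | hyi
      · -- both ≤ i : need w x = w y; use backtrack at y from periodicity
        rw [hw2a x hxi, hw2a y hyi]
        have hper := periodicity hP (le_of_lt hia) (by omega)
          (by omega) hab hib y (Or.inr ⟨hyi, by omega⟩)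
        rw [hrefl, hper]
      · -- x ≤ i < y
        rw [hw2a x hxi, hw2b y (by omega)]
        exact hrefl
      · -- y ≤ i < x : need w (x + 2) = w y
        rw [hw2b x (by omega), hw2a y hyi]
        have := hP a' (b' + 2) (y - a') haltb hbn (by omega) hab
        have e1 : a' + (y - a') = y := by omega
        have e2 : b' + 2 - (y - a') = x + 2 := by omega
        rw [e1, e2] at this
        exact this.symm
      · -- both > i : need w (x + 2) = w (y + 2); backtrack at x from periodicity
        rw [hw2b x (by omega), hw2b y (by omega)]
        have hper := periodicity hP (le_of_lt hia) (by omega)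
          (by omega) hab hib x (Or.inl ⟨by omega, by omega⟩)
        rw [← hper, hrefl]

theorem stmt11 {V : Type*} [Fintype V] (G : SimpleGraph V) (s t : V) (hst : s ≠ t)
    (d p : ℕ) (g : Sym2 V → (Fin d → ZMod 2)) (c : Fin d → ZMod 2)
    (X : Fin p → Set V) (ℓ : ℕ)
    (hno : ∀ ℓ' ≤ ℓ, ∀ w : Fin (ℓ' + 1) → V,
      Feasible G s t g c X w → ¬ Function.Injective w)
    (w : Fin (ℓ + 1) → V) (hw : Feasible G s t g c X w) :
    ∃ (i j : ℕ) (hij : i < j) (hjℓ : j ≤ ℓ),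
      w ⟨i, by omega⟩ = w ⟨j, by omega⟩ ∧
      ∃ (k : ℕ) (hk : k ≤ j - i), w ⟨i + k, by omega⟩ ≠ w ⟨j - k, by omega⟩ := by
  by_contra hgoal
  push_neg at hgoal
  -- ℕ-indexed version of the walk
  set wN : ℕ → V := fun x => w ⟨min x ℓ, Nat.lt_succ_of_le (min_le_right x ℓ)⟩ with hwN
  have hwNx : ∀ x (hx : x ≤ ℓ), wN x = w ⟨x, by omega⟩ := by
    intro x hx
    simp only [wN]
    congr 1
    exact Fin.ext (by simp [min_eq_left hx])
  obtain ⟨⟨hws, hwt, hwadj⟩, hwsum, hwX⟩ := hw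
  apply main_lemma G s t d p g c X ℓ hno ℓ le_rfl wN
  · rw [hwNx 0 (by omega)]
    rw [show (⟨0, by omega⟩ : Fin (ℓ + 1)) = 0 from rfl]
    exact hws
  · rw [hwNx ℓ le_rfl]
    exact hwt
  · intro k hk
    rw [hwNx k (by omega), hwNx (k + 1) (by omega)]
    have := hwadj ⟨k, hk⟩
    have e1 : (⟨k, hk⟩ : Fin ℓ).castSucc = ⟨k, by omega⟩ := rfl
    have e2 : (⟨k, hk⟩ : Fin ℓ).succ = ⟨k + 1, by omega⟩ := rfl
    rwa [e1, e2] at this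
  · rw [← Fin.sum_univ_eq_sum_range (fun k => g s(wN k, wN (k + 1))) ℓ]
    rw [← hwsum]
    apply Finset.sum_congr rfl
    intro k _
    rw [hwNx k.val (by omega), hwNx (k.val + 1) (by omega)]
    congr 1
  · intro ix j j' hj hj' hmem hmem'
    rw [hwNx j hj] at hmem
    rw [hwNx j' hj'] at hmem'
    have := hwX ix ⟨j, by omega⟩ ⟨j', by omega⟩ hmem hmem'
    exact congrArg Fin.val this
  · -- Pal from the negated goal
    intro a b k hab hbn hk heq
    rw [hwNx a (by omega), hwNx b (by omega)] at heq
    rw [hwNx (a + k) (by omega), hwNx (b - k) (by omega)]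
    have := hgoal a b hab hbn heq k (by omega)
    exact this
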